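/- Let G = B wr X with B, X abelian, X torsion-free, H ≤ G of finite index, f : H → G a virtual endomorphism, A the base group, A_0 = A ∩ H, and L = f(A_0) ∩ A. If L is nontrivial, then f(A_0) ≤ A. -/

import Mathlib

/-!
`f(A₀)` is abelian, being a homomorphic image of `A₀ ≤ A`, so each of its elements `g` commutes
with a nontrivial `c ∈ L ≤ A`. Conjugation by `g` acts on `A = ⊕_X B` as translation by the
`X`-component of `g`, so the finitely supported function `c` is invariant under that translation.
In a torsion-free `X` a nonzero translation has infinite orbits, so the `X`-component of `g` is
trivial, i.e. `g ∈ A`.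
-/

def shiftEquiv {B X : Type*} [AddCommGroup B] [AddCommGroup X] (x : X) :
    (X →₀ B) ≃+ (X →₀ B) := Finsupp.domCongr (Equiv.addRight x)

noncomputable def shiftHom (B X : Type*) [AddCommGroup B] [AddCommGroup X] :
    Multiplicative X →* Multiplicative (AddAut (X →₀ B)) :=
  MonoidHom.mk' (fun x => Multiplicative.ofAdd (shiftEquiv x.toAdd)) (by
    intro a b
    apply AddEquiv.ext
    intro f
    ext y
    change (shiftEquiv (a * b).toAdd f) y = (shiftEquiv a.toAdd (shiftEquiv b.toAdd f)) y
    simp [shiftEquiv, Finsupp.domCongr, Equiv.Perm.mul_def, sub_eq_add_neg]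
    congr 1
    abel)

noncomputable def wreathAct (B X : Type*) [AddCommGroup B] [AddCommGroup X] :
    Multiplicative X →* MulAut (Multiplicative (X →₀ B)) :=
  { toFun := fun x => AddEquiv.toMultiplicative (Multiplicative.toAdd (shiftHom B X x))
    map_one' := by ext f; simp
    map_mul' := by intro a b; ext f; simp }

abbrev Wreath (B X : Type*) [AddCommGroup B] [AddCommGroup X] :=
  SemidirectProduct (Multiplicative (X →₀ B)) (Multiplicative X) (wreathAct B X)

theorem Finsupp.eq_zero_of_forall_apply_sub_eq {X B : Type*} [AddGroup X] [Zero B]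
    {x : X} (hx : ¬IsOfFinAddOrder x) {b : X →₀ B} (hb : ∀ y, b (y - x) = b y) : b = 0 := by
  by_contra hne
  obtain ⟨y, hy⟩ := Finsupp.ne_iff.1 hne
  have hinv : ∀ n : ℕ, b (y - n • x) = b y := by
    intro n
    induction n with
    | zero => simp
    | succ n ih => rw [succ_nsmul', sub_add_eq_sub_sub_swap, hb, ih]
  have hinj : Function.Injective fun n : ℕ => y - n • x :=
    sub_right_injective.comp (injective_nsmul_iff_not_isOfFinAddOrder.2 hx)
  refine Set.infinite_of_injective_forall_mem hinj (fun n => ?_) b.support.finite_toSet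
  simpa [hinv n] using hy

theorem SemidirectProduct.right_apply_eq_of_commute_inl {N G : Type*} [CommGroup N] [Group G]
    {φ : G →* MulAut N} {g : N ⋊[φ] G} {n : N} (h : Commute g (inl n)) : φ g.right n = n := by
  have hleft := congrArg SemidirectProduct.left h.eq
  simp only [mul_left, left_inl, right_inl, map_one, MulAut.one_apply] at hleft
  exact mul_left_cancel (hleft.trans (mul_comm _ _))

theorem toAdd_wreathAct_apply {B X : Type*} [AddCommGroup B] [AddCommGroup X]
    (x : Multiplicative X) (c : Multiplicative (X →₀ B)) (y : X) :
    (wreathAct B X x c).toAdd y = c.toAdd (y - x.toAdd) := by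
  simp [wreathAct, shiftHom, shiftEquiv, sub_eq_add_neg]

theorem Wreath.right_eq_one_of_commute_inl {B X : Type*} [AddCommGroup B] [AddCommGroup X]
    (hX : ∀ g : X, g ≠ 0 → ¬IsOfFinAddOrder g) {g : Wreath B X}
    {c : Multiplicative (X →₀ B)} (hc : c ≠ 1) (h : Commute g (SemidirectProduct.inl c)) :
    g.right = 1 := by
  rw [← toAdd_eq_zero]
  by_contra hg
  refine hc (toAdd_eq_zero.1 (Finsupp.eq_zero_of_forall_apply_sub_eq (hX _ hg) fun y => ?_))
  rw [← toAdd_wreathAct_apply, SemidirectProduct.right_apply_eq_of_commute_inl h]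

theorem stmt14_general {B X : Type*} [AddCommGroup B] [AddCommGroup X]
    (hX : ∀ g : X, g ≠ 0 → ¬IsOfFinAddOrder g)
    (H : Subgroup (Wreath B X)) (f : H →* Wreath B X)
    (hL : Subgroup.map f
        (((SemidirectProduct.inl : Multiplicative (X →₀ B) →* Wreath B X).range).comap H.subtype)
        ⊓ (SemidirectProduct.inl : Multiplicative (X →₀ B) →* Wreath B X).range ≠ ⊥) :
    Subgroup.map f
        (((SemidirectProduct.inl : Multiplicative (X →₀ B) →* Wreath B X).range).comap H.subtype)
      ≤ (SemidirectProduct.inl : Multiplicative (X →₀ B) →* Wreath B X).range := by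
  set A := (SemidirectProduct.inl : Multiplicative (X →₀ B) →* Wreath B X).range with hA
  obtain ⟨⟨_, hl, c, rfl⟩, hc⟩ := Subgroup.ne_bot_iff_exists_ne_one.1 hL
  replace hc : c ≠ 1 := by rintro rfl; exact hc (Subtype.ext (map_one _))
  have : IsMulCommutative (A.comap H.subtype) :=
    A.comap_injective_isMulCommutative H.subtype_injective
  intro g hg
  rw [hA, SemidirectProduct.range_inl_eq_ker_rightHom, MonoidHom.mem_ker]
  exact Wreath.right_eq_one_of_commute_inl hX hc (setLike_mul_comm hg hl)

/-- `G = B wr X`, `X` torsion-free, `H ≤ G` of finite index, `f : H → G`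
a virtual endomorphism, `A` the base group, `A₀ = A ∩ H`, `L = f(A₀) ∩ A`.
If `L` is nontrivial then `f(A₀) ≤ A`. -/
theorem stmt14 {B X : Type*} [AddCommGroup B] [AddCommGroup X]
    (hX : ∀ g : X, g ≠ 0 → ¬IsOfFinAddOrder g)
    (H : Subgroup (Wreath B X)) [H.FiniteIndex] (f : H →* Wreath B X)
    (hL : Subgroup.map f
        (((SemidirectProduct.inl : Multiplicative (X →₀ B) →* Wreath B X).range).comap H.subtype)
        ⊓ (SemidirectProduct.inl : Multiplicative (X →₀ B) →* Wreath B X).range ≠ ⊥) :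
    Subgroup.map f
        (((SemidirectProduct.inl : Multiplicative (X →₀ B) →* Wreath B X).range).comap H.subtype)
      ≤ (SemidirectProduct.inl : Multiplicative (X →₀ B) →* Wreath B X).range :=
  stmt14_general hX H f hL
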